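/- Let φ be a multiplicative bijective map from the triangular algebra T = Tri(A,M,B) onto an arbitrary ring R', where A satisfies (i) and B satisfies (ii). Then φ is additive on T11: for all a11, b11 ∈ T11, φ(a11 + b11) = φ(a11) + φ(b11). -/
import Mathlib


/-- The triangular algebra `Tri(A, M, B)`: formal matrices `[[a, m], [0, b]]` with
`a ∈ A`, `m ∈ M`, `b ∈ B`, under the usual matrix operations. -/
@[ext]
structure Tri (A M B : Type*) where
  a : A
  m : M
  b : B

namespace Tri

variable {A M B : Type*}

section AddGroup

variable [AddCommGroup A] [AddCommGroup M] [AddCommGroup B]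

instance : Add (Tri A M B) := ⟨fun x y => ⟨x.a + y.a, x.m + y.m, x.b + y.b⟩⟩
instance : Zero (Tri A M B) := ⟨⟨0, 0, 0⟩⟩
instance : Neg (Tri A M B) := ⟨fun x => ⟨-x.a, -x.m, -x.b⟩⟩

@[simp] theorem add_a (x y : Tri A M B) : (x + y).a = x.a + y.a := rfl
@[simp] theorem add_m (x y : Tri A M B) : (x + y).m = x.m + y.m := rfl
@[simp] theorem add_b (x y : Tri A M B) : (x + y).b = x.b + y.b := rfl
@[simp] theorem zero_a : (0 : Tri A M B).a = 0 := rfl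
@[simp] theorem zero_m : (0 : Tri A M B).m = 0 := rfl
@[simp] theorem zero_b : (0 : Tri A M B).b = 0 := rfl
@[simp] theorem neg_a (x : Tri A M B) : (-x).a = -x.a := rfl
@[simp] theorem neg_m (x : Tri A M B) : (-x).m = -x.m := rfl
@[simp] theorem neg_b (x : Tri A M B) : (-x).b = -x.b := rfl

instance : AddCommGroup (Tri A M B) where
  add_assoc x y z := by ext <;> simp [add_assoc]
  zero_add x := by ext <;> simp
  add_zero x := by ext <;> simp
  nsmul := nsmulRec
  zsmul := zsmulRec
  neg_add_cancel x := by ext <;> simp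
  add_comm x y := by ext <;> simp [add_comm]

end AddGroup

section Mul

variable [NonUnitalRing A] [NonUnitalRing B] [AddCommGroup M]
  [SMul A M] [SMul Bᵐᵒᵖ M]

/-- Multiplication of formal upper-triangular matrices:
`[[a, m], [0, b]] * [[a', m'], [0, b']] = [[a * a', a • m' + m • b'], [0, b * b']]`,
where `m • b'` is the right action of `B`, encoded via `Bᵐᵒᵖ`. -/
instance : Mul (Tri A M B) :=
  ⟨fun x y => ⟨x.a * y.a, x.a • y.m + MulOpposite.op y.b • x.m, x.b * y.b⟩⟩

end Mul

/-- The embedding of `A` as the corner `T₁₁` of the triangular algebra. -/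
def e11 [Zero M] [Zero B] (a : A) : Tri A M B := ⟨a, 0, 0⟩

/-- The embedding of `M` as the corner `T₁₂` of the triangular algebra. -/
def e12 [Zero A] [Zero B] (m : M) : Tri A M B := ⟨0, m, 0⟩

/-- The embedding of `B` as the corner `T₂₂` of the triangular algebra. -/
def e22 [Zero A] [Zero M] (b : B) : Tri A M B := ⟨0, 0, b⟩

end Tri

/-- `M` is an `(A, B)`-bimodule (left `A`-action, right `B`-action encoded via `Bᵐᵒᵖ`)
compatible with the `R`-module structures, where `A` and `B` are (possibly non-unital)
algebras over the commutative ring `R`. -/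
class TriBimodule (R A M B : Type*) [CommRing R]
    [NonUnitalRing A] [NonUnitalRing B] [AddCommGroup M]
    [Module R A] [Module R B] [Module R M]
    [SMul A M] [SMul Bᵐᵒᵖ M] : Prop where
  smul_add_left : ∀ (a : A) (m m' : M), a • (m + m') = a • m + a • m'
  add_smul_left : ∀ (a a' : A) (m : M), (a + a') • m = a • m + a' • m
  mul_smul_left : ∀ (a a' : A) (m : M), (a * a') • m = a • (a' • m)
  smul_add_right : ∀ (b : Bᵐᵒᵖ) (m m' : M), b • (m + m') = b • m + b • m'
  add_smul_right : ∀ (b b' : Bᵐᵒᵖ) (m : M), (b + b') • m = b • m + b' • m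
  mul_smul_right : ∀ (b b' : Bᵐᵒᵖ) (m : M), (b * b') • m = b • (b' • m)
  smul_smul_comm : ∀ (a : A) (b : Bᵐᵒᵖ) (m : M), a • (b • m) = b • (a • m)
  rsmul_smul_left : ∀ (r : R) (a : A) (m : M), (r • a) • m = r • (a • m)
  rsmul_smul_right : ∀ (r : R) (b : Bᵐᵒᵖ) (m : M), (r • b) • m = r • (b • m)



section AuxLemmas
set_option linter.unusedSectionVars false

variable {A M B : Type*}

@[simp] theorem Tri.mk_a' [Zero A] (a : A) (m : M) (b : B) : (Tri.mk a m b).a = a := rfl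
@[simp] theorem Tri.mk_m' (a : A) (m : M) (b : B) : (Tri.mk a m b).m = m := rfl
@[simp] theorem Tri.mk_b' (a : A) (m : M) (b : B) : (Tri.mk a m b).b = b := rfl

section WithZero
variable [Zero A] [Zero M] [Zero B]

@[simp] theorem Tri.e11_a (a : A) : (Tri.e11 a : Tri A M B).a = a := rfl
@[simp] theorem Tri.e11_m (a : A) : (Tri.e11 a : Tri A M B).m = 0 := rfl
@[simp] theorem Tri.e11_b (a : A) : (Tri.e11 a : Tri A M B).b = 0 := rfl
@[simp] theorem Tri.e12_a (m : M) : (Tri.e12 m : Tri A M B).a = 0 := rfl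
@[simp] theorem Tri.e12_m (m : M) : (Tri.e12 m : Tri A M B).m = m := rfl
@[simp] theorem Tri.e12_b (m : M) : (Tri.e12 m : Tri A M B).b = 0 := rfl
@[simp] theorem Tri.e22_a (b : B) : (Tri.e22 b : Tri A M B).a = 0 := rfl
@[simp] theorem Tri.e22_m (b : B) : (Tri.e22 b : Tri A M B).m = 0 := rfl
@[simp] theorem Tri.e22_b (b : B) : (Tri.e22 b : Tri A M B).b = b := rfl

end WithZero

section Grp
variable [AddCommGroup A] [AddCommGroup M] [AddCommGroup B]

@[simp] theorem Tri.e11_zero : (Tri.e11 (0 : A) : Tri A M B) = 0 := rfl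
@[simp] theorem Tri.e12_zero : (Tri.e12 (0 : M) : Tri A M B) = 0 := rfl
@[simp] theorem Tri.e22_zero : (Tri.e22 (0 : B) : Tri A M B) = 0 := rfl
@[simp] theorem Tri.mk_zero : (Tri.mk 0 0 0 : Tri A M B) = 0 := rfl

end Grp

section MulLemmas
variable [NonUnitalRing A] [NonUnitalRing B] [AddCommGroup M]
  [SMul A M] [SMul Bᵐᵒᵖ M]

@[simp] theorem Tri.mul_a' (x y : Tri A M B) : (x * y).a = x.a * y.a := rfl
@[simp] theorem Tri.mul_m' (x y : Tri A M B) :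
    (x * y).m = x.a • y.m + MulOpposite.op y.b • x.m := rfl
@[simp] theorem Tri.mul_b' (x y : Tri A M B) : (x * y).b = x.b * y.b := rfl

end MulLemmas

section Bimod

variable {R : Type*} [CommRing R]
    [NonUnitalRing A] [NonUnitalRing B] [AddCommGroup M]
    [Module R A] [Module R B] [Module R M]
    [SMul A M] [SMul Bᵐᵒᵖ M] [tb : TriBimodule R A M B]

include tb

theorem aux_smul_zeroA (a : A) : a • (0 : M) = 0 := by
  have h := TriBimodule.smul_add_left (R := R) (B := B) a (0 : M) 0
  rw [add_zero] at h
  exact left_eq_add.mp h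

theorem aux_zero_smulA (m : M) : (0 : A) • m = 0 := by
  have h := TriBimodule.add_smul_left (R := R) (B := B) (0 : A) 0 m
  rw [add_zero] at h
  exact left_eq_add.mp h

theorem aux_smul_zeroB (b : Bᵐᵒᵖ) : b • (0 : M) = 0 := by
  have h := TriBimodule.smul_add_right (R := R) (A := A) b (0 : M) 0
  rw [add_zero] at h
  exact left_eq_add.mp h

theorem aux_zero_smulB (m : M) : (0 : Bᵐᵒᵖ) • m = 0 := by
  have h := TriBimodule.add_smul_right (R := R) (A := A) (0 : Bᵐᵒᵖ) 0 m
  rw [add_zero] at h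
  exact left_eq_add.mp h

theorem aux_neg_smulA (x : A) (m : M) : (-x) • m = -(x • m) := by
  have h := TriBimodule.add_smul_left (R := R) (B := B) x (-x) m
  rw [add_neg_cancel, aux_zero_smulA (R := R) (B := B)] at h
  exact (neg_eq_of_add_eq_zero_right h.symm).symm

theorem aux_neg_smulB (y : Bᵐᵒᵖ) (m : M) : (-y) • m = -(y • m) := by
  have h := TriBimodule.add_smul_right (R := R) (A := A) y (-y) m
  rw [add_neg_cancel, aux_zero_smulB (R := R) (A := A)] at h
  exact (neg_eq_of_add_eq_zero_right h.symm).symm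

theorem aux_sub_smulA (x y : A) (m : M) : (x - y) • m = x • m - y • m := by
  rw [sub_eq_add_neg, TriBimodule.add_smul_left (R := R) (B := B), aux_neg_smulA (R := R) (B := B),
    sub_eq_add_neg]

theorem aux_sub_smulB (x y : Bᵐᵒᵖ) (m : M) : (x - y) • m = x • m - y • m := by
  rw [sub_eq_add_neg, TriBimodule.add_smul_right (R := R) (A := A), aux_neg_smulB (R := R) (A := A),
    sub_eq_add_neg]

end Bimod

end AuxLemmas

theorem mult_additive_on_T11
    {R A M B R' : Type*} [CommRing R]
    [NonUnitalRing A] [NonUnitalRing B] [AddCommGroup M]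
    [Module R A] [Module R B] [Module R M]
    [SMulCommClass R A A] [IsScalarTower R A A]
    [SMulCommClass R B B] [IsScalarTower R B B]
    [SMul A M] [SMul Bᵐᵒᵖ M] [TriBimodule R A M B]
    (hfaithA : ∀ a : A, (∀ m : M, a • m = 0) → a = 0)
    (hfaithB : ∀ b : B, (∀ m : M, MulOpposite.op b • m = 0) → b = 0)
    (hA₁ : ∀ a : A, (∀ x : A, a * x = 0) → a = 0)
    (hA₂ : ∀ a : A, (∀ x : A, x * a = 0) → a = 0)
    (hB₁ : ∀ b : B, (∀ y : B, b * y = 0) → b = 0)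
    (hB₂ : ∀ b : B, (∀ y : B, y * b = 0) → b = 0)
    [Ring R'] (φ : Tri A M B → R')
    (hbij : Function.Bijective φ)
    (hmul : ∀ x y : Tri A M B, φ (x * y) = φ x * φ y) :
    ∀ a a' : A, φ ((Tri.e11 a : Tri A M B) + Tri.e11 a') = φ (Tri.e11 a) + φ (Tri.e11 a') := by
  classical
  obtain ⟨hinj, hsurj⟩ := hbij
  -- generic product shapes
  have P_t_e12 : ∀ (t : Tri A M B) (n : M), t * Tri.e12 n = Tri.e12 (t.a • n) := by
    intro t n
    ext <;> simp [aux_zero_smulB (R := R) (A := A)]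
  have P_e12_t : ∀ (n : M) (t : Tri A M B),
      Tri.e12 n * t = Tri.e12 (MulOpposite.op t.b • n) := by
    intro n t
    ext <;> simp [aux_zero_smulA (R := R) (B := B)]
  have P_e11_t : ∀ (x : A) (t : Tri A M B),
      Tri.e11 x * t = (Tri.mk (x * t.a) (x • t.m) 0 : Tri A M B) := by
    intro x t
    ext <;> simp [aux_smul_zeroB (R := R) (A := A)]
  have P_t_e22 : ∀ (t : Tri A M B) (y : B),
      t * Tri.e22 y = (Tri.mk 0 (MulOpposite.op y • t.m) (t.b * y) : Tri A M B) := by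
    intro t y
    ext <;> simp [aux_smul_zeroA (R := R) (B := B)]
  -- φ 0 = 0
  have hzero_mul : ∀ z : Tri A M B, (0 : Tri A M B) * z = 0 := by
    intro z
    ext <;> simp [aux_zero_smulA (R := R) (B := B), aux_smul_zeroB (R := R) (A := A)]
  have hphi0 : φ 0 = 0 := by
    obtain ⟨z, hz⟩ := hsurj 0
    have h := hmul 0 z
    rw [hzero_mul z, hz, mul_zero] at h
    exact h
  -- a two-sided unit of T
  obtain ⟨u, hu⟩ := hsurj 1
  have hL : ∀ x : Tri A M B, u * x = x := fun x => hinj (by rw [hmul, hu, one_mul])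
  have hR : ∀ x : Tri A M B, x * u = x := fun x => hinj (by rw [hmul, hu, mul_one])
  have eAct : ∀ m : M, u.a • m = m := by
    intro m
    have h := congrArg Tri.m (hL (Tri.e12 m))
    simpa [aux_zero_smulB (R := R) (A := A)] using h
  have fAct : ∀ m : M, MulOpposite.op u.b • m = m := by
    intro m
    have h := congrArg Tri.m (hR (Tri.e12 m))
    simpa [aux_zero_smulA (R := R) (B := B)] using h
  -- faithfulness helpers
  have hfaithA' : ∀ x y : A, (∀ n : M, x • n = y • n) → x = y := by
    intro x y h
    have hz : x - y = 0 := hfaithA _ (fun n => by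
      rw [aux_sub_smulA (R := R) (B := B), h n, sub_self])
    exact sub_eq_zero.mp hz
  have hfaithB' : ∀ x y : B, (∀ n : M, MulOpposite.op x • n = MulOpposite.op y • n) →
      x = y := by
    intro x y h
    have hz : x - y = 0 := hfaithB _ (fun n => by
      rw [MulOpposite.op_sub, aux_sub_smulB (R := R) (A := A), h n, sub_self])
    exact sub_eq_zero.mp hz
  -- Step 2 : φ(a11 + m12) = φ(a11) + φ(m12)
  have step2 : ∀ (x : A) (m : M),
      φ (Tri.mk x m 0 : Tri A M B) = φ (Tri.e11 x) + φ (Tri.e12 m) := by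
    intro x m
    obtain ⟨t, ht⟩ := hsurj (φ (Tri.e11 x) + φ (Tri.e12 m))
    have htb : t.b = 0 := by
      apply hfaithB'
      intro n
      have h : φ (Tri.e12 n * t) = φ (Tri.e12 n) * (φ (Tri.e11 x) + φ (Tri.e12 m)) := by
        rw [hmul, ht]
      rw [mul_add, ← hmul, ← hmul, P_e12_t, P_e12_t, P_e12_t] at h
      simp [aux_zero_smulB (R := R) (A := A), hphi0] at h
      have h2 : Tri.e12 (MulOpposite.op t.b • n) = (0 : Tri A M B) :=
        hinj (by rw [h, hphi0])
      have h3 := congrArg Tri.m h2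
      simpa [aux_zero_smulB (R := R) (A := A)] using h3
    have hta : t.a = x := by
      apply hfaithA'
      intro n
      have h : φ (t * Tri.e12 n) = (φ (Tri.e11 x) + φ (Tri.e12 m)) * φ (Tri.e12 n) := by
        rw [hmul, ht]
      rw [add_mul, ← hmul, ← hmul, P_t_e12, P_t_e12, P_t_e12] at h
      simp [aux_zero_smulA (R := R) (B := B), hphi0] at h
      have h2 := hinj h
      simpa using congrArg Tri.m h2
    have htm : t.m = m := by
      have h : φ (t * Tri.e22 u.b) = (φ (Tri.e11 x) + φ (Tri.e12 m)) * φ (Tri.e22 u.b) := by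
        rw [hmul, ht]
      rw [add_mul, ← hmul, ← hmul, P_t_e22, P_t_e22, P_t_e22] at h
      simp [aux_smul_zeroA (R := R) (B := B), hphi0, htb, fAct] at h
      have h2 := hinj h
      simpa using congrArg Tri.m h2
    have hts : t = (Tri.mk x m 0 : Tri A M B) := by
      ext
      · exact hta
      · exact htm
      · exact htb
    rw [← hts, ht]
  -- Step 3 : φ(m12 + b22) = φ(m12) + φ(b22)
  have step3 : ∀ (y : B) (m : M),
      φ (Tri.mk 0 m y : Tri A M B) = φ (Tri.e12 m) + φ (Tri.e22 y) := by
    intro y m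
    obtain ⟨t, ht⟩ := hsurj (φ (Tri.e12 m) + φ (Tri.e22 y))
    have htb : t.b = y := by
      apply hfaithB'
      intro n
      have h : φ (Tri.e12 n * t) = φ (Tri.e12 n) * (φ (Tri.e12 m) + φ (Tri.e22 y)) := by
        rw [hmul, ht]
      rw [mul_add, ← hmul, ← hmul, P_e12_t, P_e12_t, P_e12_t] at h
      simp [aux_zero_smulB (R := R) (A := A), hphi0] at h
      have h2 := hinj h
      simpa using congrArg Tri.m h2
    have hta : t.a = 0 := by
      apply hfaithA _ (fun n => ?_)
      have h : φ (t * Tri.e12 n) = (φ (Tri.e12 m) + φ (Tri.e22 y)) * φ (Tri.e12 n) := by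
        rw [hmul, ht]
      rw [add_mul, ← hmul, ← hmul, P_t_e12, P_t_e12, P_t_e12] at h
      simp [aux_zero_smulA (R := R) (B := B), hphi0] at h
      have h2 : Tri.e12 (t.a • n) = (0 : Tri A M B) := hinj (by rw [h, hphi0])
      simpa using congrArg Tri.m h2
    have htm : t.m = m := by
      have h : φ (Tri.e11 u.a * t) = φ (Tri.e11 u.a) * (φ (Tri.e12 m) + φ (Tri.e22 y)) := by
        rw [hmul, ht]
      rw [mul_add, ← hmul, ← hmul, P_e11_t, P_e11_t, P_e11_t] at h
      simp [aux_smul_zeroA (R := R) (B := B), hphi0, eAct] at h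
      have h2 := hinj h
      simpa using congrArg Tri.m h2
    have hts : t = (Tri.mk 0 m y : Tri A M B) := by
      ext
      · exact hta
      · exact htm
      · exact htb
    rw [← hts, ht]
  -- additivity on T12
  have stepA : ∀ m n : M,
      φ (Tri.e12 (m + n) : Tri A M B) = φ (Tri.e12 m) + φ (Tri.e12 n) := by
    intro m n
    have key : (Tri.mk u.a n 0 : Tri A M B) * Tri.mk 0 m u.b = Tri.e12 (m + n) := by
      ext <;> simp [eAct, fAct]
    have h : φ (Tri.e12 (m + n) : Tri A M B) =
        (φ (Tri.e11 u.a) + φ (Tri.e12 n)) * (φ (Tri.e12 m) + φ (Tri.e22 u.b)) := by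
      rw [← step2, ← step3, ← hmul, key]
    rw [add_mul, mul_add, mul_add, ← hmul, ← hmul, ← hmul, ← hmul,
      P_e11_t, P_e11_t, P_e12_t, P_e12_t] at h
    simp only [Tri.e12_a, Tri.e12_m, Tri.e12_b, Tri.e22_a, Tri.e22_m, Tri.e22_b,
      mul_zero, zero_mul, eAct, fAct, MulOpposite.op_zero,
      aux_smul_zeroA (R := R) (B := B), aux_zero_smulB (R := R) (A := A), Tri.mk_zero, Tri.e12_zero,
      hphi0, add_zero, zero_add] at h
    exact h
  -- Step 4 : the goal
  intro a a'
  obtain ⟨t, ht⟩ := hsurj (φ (Tri.e11 a) + φ (Tri.e11 a'))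
  have htb : t.b = 0 := by
    apply hfaithB'
    intro n
    have h : φ (Tri.e12 n * t) = φ (Tri.e12 n) * (φ (Tri.e11 a) + φ (Tri.e11 a')) := by
      rw [hmul, ht]
    rw [mul_add, ← hmul, ← hmul, P_e12_t, P_e12_t, P_e12_t] at h
    simp [aux_zero_smulB (R := R) (A := A), hphi0] at h
    have h2 : Tri.e12 (MulOpposite.op t.b • n) = (0 : Tri A M B) :=
      hinj (by rw [h, hphi0])
    simpa [aux_zero_smulB (R := R) (A := A)] using congrArg Tri.m h2
  have hta : t.a = a + a' := by
    apply hfaithA'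
    intro n
    have h : φ (t * Tri.e12 n) = (φ (Tri.e11 a) + φ (Tri.e11 a')) * φ (Tri.e12 n) := by
      rw [hmul, ht]
    rw [add_mul, ← hmul, ← hmul, P_t_e12, P_t_e12, P_t_e12] at h
    simp only [Tri.e11_a] at h
    rw [← stepA] at h
    have h2 := hinj h
    have h3 := congrArg Tri.m h2
    rw [TriBimodule.add_smul_left (R := R) (B := B)]
    simpa using h3
  have htm : t.m = 0 := by
    have h : φ (t * Tri.e22 u.b) = (φ (Tri.e11 a) + φ (Tri.e11 a')) * φ (Tri.e22 u.b) := by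
      rw [hmul, ht]
    rw [add_mul, ← hmul, ← hmul, P_t_e22, P_t_e22, P_t_e22] at h
    simp [aux_smul_zeroA (R := R) (B := B), hphi0, htb, fAct] at h
    have h2 : (Tri.mk 0 t.m 0 : Tri A M B) = 0 := hinj (by rw [h, hphi0])
    simpa using congrArg Tri.m h2
  have hsum : (Tri.e11 a : Tri A M B) + Tri.e11 a' = t := by
    ext
    · simp [hta]
    · simp [htm]
    · simp [htb]
  rw [hsum, ht]
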